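/- An infinite H-tree T is 𝔭^cmz_H-narrow if and only if [T] has measure zero with respect to the product measure on 𝒳 = ∏_{i<ω} H(i). -/

import Mathlib

open Set Filter MeasureTheory NNReal ENNReal

namespace UnivForcing

abbrev Node := List ℕ

/-- `η` is a node respecting `H`: each entry is below the corresponding value of `H`. -/
def IsHNode (H : ℕ → ℕ) (η : Node) : Prop := ∀ i < η.length, η.getD i 0 < H i

/-- A tree of finite sequences: contains the empty sequence and is closed under prefixes. -/
def IsTreeSet (T : Set Node) : Prop :=
  ([] : Node) ∈ T ∧ ∀ η ∈ T, ∀ ν : Node, ν <+: η → ν ∈ T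

/-- The nodes of `T` of length exactly `n`. -/
def levelSet (T : Set Node) (n : ℕ) : Set Node := {η ∈ T | η.length = n}

/-- The nodes of `T` of length at most `n`. -/
def below (T : Set Node) (n : ℕ) : Set Node := {η ∈ T | η.length ≤ n}

/-- A finite `H`-tree of level `N`. -/
def IsFinTree (H : ℕ → ℕ) (T : Set Node) (N : ℕ) : Prop :=
  IsTreeSet T ∧ (∀ η ∈ T, IsHNode H η ∧ η.length ≤ N) ∧
    ∀ η ∈ T, ∃ ν ∈ T, η <+: ν ∧ ν.length = N

/-- An infinite `H`-tree: a tree of `H`-nodes with no maximal nodes. -/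
def IsInfTree (H : ℕ → ℕ) (T : Set Node) : Prop :=
  IsTreeSet T ∧ (∀ η ∈ T, IsHNode H η) ∧ ∀ η ∈ T, ∃ ν ∈ T, η <+: ν ∧ η ≠ ν

/-- A simplified universality parameter (Definition 2.2). -/
structure UnivParam (H : ℕ → ℕ) where
  G : Set (Set Node × ℕ × ℕ)
  F : ℕ → ℕ
  G_tree : ∀ S a b, (S, a, b) ∈ G → ∃ N, IsFinTree H S N ∧ a ≤ b ∧ b ≤ N
  G_root : ((({([] : Node)}) : Set Node), 0, 0) ∈ G
  G_mono : ∀ S0 a0 b0 N0 S1 N1, (S0, a0, b0) ∈ G → IsFinTree H S0 N0 →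
    IsFinTree H S1 N1 → N0 ≤ N1 → levelSet S1 N0 ⊆ S0 →
    ∀ a1 b1, a1 ≤ a0 → b0 ≤ b1 → b1 ≤ N1 → (S1, a1, b1) ∈ G
  F_incr : StrictMono F
  G_amalg : ∀ S0 a0 b0 S1 a1 b1 N S M,
    (S0, a0, b0) ∈ G → (S1, a1, b1) ∈ G →
    IsFinTree H S0 N → IsFinTree H S1 N → IsFinTree H S M → M < N →
    levelSet S0 M ⊆ S → levelSet S1 M ⊆ S →
    M < a0 → b0 < a1 → F b1 < N →
    ∃ S', (S', a0, F b1) ∈ G ∧ IsFinTree H S' N ∧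
      S0 ∪ S1 ⊆ S' ∧ levelSet S' M = levelSet S M

/-- `T` is narrow with respect to the family `G` (Definition 2.3(1)). -/
def IsNarrowG (G : Set (Set Node × ℕ × ℕ)) (T : Set Node) : Prop :=
  ∀ m, ∃ a, m ≤ a ∧ ∃ b, a < b ∧ (below T (b + 1), a, b) ∈ G

def IsNarrow {H : ℕ → ℕ} (p : UnivParam H) (T : Set Node) : Prop := IsNarrowG p.G T

/-- Suitability of a universality parameter (Definition 3.5(1)). -/
def Suitable {H : ℕ → ℕ} (p : UnivParam H) : Prop :=
  (∀ n, ∃ N, n < N ∧ ∀ S a b NS, (S, a, b) ∈ p.G → IsFinTree H S NS → N ≤ a →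
    ∀ η : Node, IsHNode H η → η.length = n →
      ∃ ν : Node, IsHNode H ν ∧ ν.length = NS ∧ η <+: ν ∧ ν ∉ S) ∧
  (∀ n, ∃ N, n < N ∧ ∀ S, IsFinTree H S n →
    ∀ η : Node, IsHNode H η → η.length = N → η.take n ∈ S →
      ∃ S' a b, (S', a, b) ∈ p.G ∧ n < a ∧ a ≤ b ∧ b < N ∧ S ⊆ S' ∧
        levelSet S' n = levelSet S n ∧ η ∈ S')

/-- The space 𝒳 = ∏_{i<ω} H(i). -/
abbrev XSp (H : ℕ → ℕ) := (i : ℕ) → Fin (H i)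

/-- The initial segment of length `n` of a point of 𝒳, as a node. -/
def branchNode (H : ℕ → ℕ) (x : XSp H) (n : ℕ) : Node :=
  List.ofFn fun i : Fin n => (x i : ℕ)

/-- The set of ω-branches `[T]` of a tree `T`, as a subset of 𝒳. -/
def branches (H : ℕ → ℕ) (T : Set Node) : Set (XSp H) :=
  {x | ∀ n, branchNode H x n ∈ T}

/-- A closed narrow set: the branch set of a narrow infinite `H`-tree. -/
def NarrowClosedG (H : ℕ → ℕ) (G : Set (Set Node × ℕ × ℕ)) (A : Set (XSp H)) : Prop :=
  ∃ T, IsInfTree H T ∧ IsNarrowG G T ∧ A = branches H T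

/-- The ideal ℐ⁰ generated by narrow closed sets. -/
def I0G (H : ℕ → ℕ) (G : Set (Set Node × ℕ × ℕ)) : Set (Set (XSp H)) :=
  {A | ∃ (n : ℕ) (f : Fin n → Set (XSp H)),
    (∀ i, NarrowClosedG H G (f i)) ∧ A ⊆ ⋃ i, f i}

/-- The σ-ideal ℐ generated by narrow closed sets. -/
def IpG (H : ℕ → ℕ) (G : Set (Set Node × ℕ × ℕ)) : Set (Set (XSp H)) :=
  {A | ∃ f : ℕ → Set (XSp H), (∀ n, NarrowClosedG H G (f n)) ∧ A ⊆ ⋃ n, f n}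

/-- A coordinate-wise permutation for `H`. -/
structure CWPerm (H : ℕ → ℕ) where
  f : ℕ → ℕ → ℕ
  bij : ∀ n, Set.BijOn (f n) (Set.Iio (H n)) (Set.Iio (H n))
  id_out : ∀ n k, H n ≤ k → f n k = k

/-- The action of a coordinate-wise permutation on a node. -/
def CWPerm.apply {H : ℕ → ℕ} (π : CWPerm H) (η : Node) : Node :=
  η.mapIdx fun i k => π.f i k

/-- `π` is an `n`-coordinate-wise permutation. -/
def CWPerm.IsRat {H : ℕ → ℕ} (π : CWPerm H) (n : ℕ) : Prop :=
  ∀ m, n < m → ∀ k, π.f m k = k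

/-- The action of a coordinate-wise permutation on the space 𝒳. -/
def CWPerm.act {H : ℕ → ℕ} (π : CWPerm H) (x : XSp H) : XSp H :=
  fun i => ⟨π.f i (x i).val, (π.bij i).mapsTo (x i).isLt⟩

/-- A regular universality parameter (Definition 3.13). -/
def RegularParam {H : ℕ → ℕ} (p : UnivParam H) : Prop :=
  Suitable p ∧ ∀ π : CWPerm H, (∃ n, π.IsRat n) →
    ∀ S a b, (S, a, b) ∈ p.G → (π.apply '' S, a, b) ∈ p.G

/-- The additivity of an ideal (family of sets). -/
noncomputable def addIdeal {α : Type} (I : Set (Set α)) : Cardinal :=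
  sInf {c | ∃ A : Set (Set α), A ⊆ I ∧ ⋃₀ A ∉ I ∧ Cardinal.mk A = c}

/-- The cofinality of an ideal (family of sets). -/
noncomputable def cofIdeal {α : Type} (I : Set (Set α)) : Cardinal :=
  sInf {c | ∃ A : Set (Set α), A ⊆ I ∧ (∀ B ∈ I, ∃ C ∈ A, B ⊆ C) ∧ Cardinal.mk A = c}

/-- Eventual domination `f ≤* g`. -/
def evDomLE (f g : ℕ → ℕ) : Prop := ∀ᶠ n in atTop, f n ≤ g n

/-- The unbounding number 𝔟. -/
noncomputable def bNum : Cardinal :=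
  sInf {c | ∃ F : Set (ℕ → ℕ), (∀ g, ∃ f ∈ F, ¬ evDomLE f g) ∧ Cardinal.mk F = c}

/-- The dominating number 𝔡. -/
noncomputable def dNum : Cardinal :=
  sInf {c | ∃ F : Set (ℕ → ℕ), (∀ g, ∃ f ∈ F, evDomLE g f) ∧ Cardinal.mk F = c}

/-- The family 𝒢^{g,A}_𝐅 of Definition 2.8. -/
def GgA (H : ℕ → ℕ) (g : ℕ → ℕ) (A : Set ℕ) (FF : Set Node → NNReal) :
    Set (Set Node × ℕ × ℕ) :=
  {x | x = ((({([] : Node)}) : Set Node), 0, 0) ∨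
    ∃ (S : Set Node) (a b N : ℕ), x = (S, a, b) ∧ IsFinTree H S N ∧ a ≤ b ∧ b ≤ N ∧
      (∀ ν ∈ levelSet S a, ∃ η : Node, IsHNode H η ∧ η.length = N ∧ ν <+: η ∧ η ∉ S) ∧
      ∃ Y : ℕ → Set Node,
        (∀ i ∈ A ∩ Set.Ico a b, IsFinTree H (Y i) (i + 1) ∧ FF (Y i) ≤ (g i : NNReal)) ∧
        ∀ η ∈ levelSet S N, ∃ i ∈ A ∩ Set.Ico a b, η.take (i + 1) ∈ levelSet (Y i) (i + 1)}

/-- The family 𝒢^cmz_H of Definition 2.12. -/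
def Gcmz (H : ℕ → ℕ) : Set (Set Node × ℕ × ℕ) :=
  {x | x = ((({([] : Node)}) : Set Node), 0, 0) ∨
    ∃ (S : Set Node) (a b N : ℕ), x = (S, a, b) ∧ IsFinTree H S N ∧ a ≤ b ∧ b ≤ N ∧
      ((levelSet S b).ncard : ℝ) / (∏ i ∈ Finset.range b, (H i : ℝ)) ≤
        ∑ i ∈ Finset.Icc a b, 1 / ((i : ℝ) + 1) ^ 2}

/-- The level of a set of nodes (the supremum of the lengths of its elements). -/
noncomputable def treeLev (S : Set Node) : ℕ := sSup {n | ∃ η ∈ S, η.length = n}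

/-- The function 𝐅₂ of Example 2.10(2). -/
noncomputable def F2fn (S : Set Node) : NNReal :=
  ((({k | ∃ η ∈ levelSet S (treeLev S), η.getLast? = some k}).ncard - 1 : ℕ) : NNReal)

/-- Immediate successors of a node in a tree. -/
def succs (S : Set Node) (s : Node) : Set Node :=
  {ν ∈ S | s <+: ν ∧ ν.length = s.length + 1}

/-- The function 𝐅₀ of Example 2.10(1). -/
noncomputable def F0fn (S : Set Node) : NNReal :=
  ((sSup {m | ∃ s ∈ S, (∃ ν ∈ S, s <+: ν ∧ s ≠ ν) ∧ m = (succs S s).ncard - 1} : ℕ) : NNReal)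

/-- The function 𝐅₁ of Example 2.10(1). -/
noncomputable def F1fn (S : Set Node) : NNReal :=
  (((levelSet S (treeLev S)).ncard - 1 : ℕ) : NNReal)

/-- The basic cylinder determined by a node. -/
def cyl (H : ℕ → ℕ) (η : Node) : Set (XSp H) := {x | branchNode H x η.length = η}

/-- The mass of the cylinder of a node with respect to the product measure:
`1/∏_{i<lh(η)} H(i)`. -/
noncomputable def cylMass (H : ℕ → ℕ) (η : Node) : ℝ≥0∞ :=
  (∏ i ∈ Finset.range η.length, (H i : ℝ≥0∞))⁻¹

/-- `A` is null with respect to the product measure on 𝒳 (each factor carrying the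
uniform probability measure): for every `ε > 0`, `A` can be covered by countably many
basic cylinders of total mass at most `ε`. -/
def ProdNull (H : ℕ → ℕ) (A : Set (XSp H)) : Prop :=
  ∀ ε : ℝ≥0∞, 0 < ε → ∃ C : ℕ → Node, A ⊆ (⋃ n, cyl H (C n)) ∧ ∑' n, cylMass H (C n) ≤ ε

/-- A condition in the forcing notion Q^tree(𝔭). -/
def QCond (H : ℕ → ℕ) (p : UnivParam H) (q : ℕ × Set Node) : Prop :=
  IsInfTree H q.2 ∧ IsNarrow p q.2

/-- The order of the forcing notion Q^tree(𝔭). -/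
def QLe (q r : ℕ × Set Node) : Prop :=
  q.1 ≤ r.1 ∧ q.2 ⊆ r.2 ∧ levelSet r.2 q.1 = levelSet q.2 q.1


/-- The subtree `T^{[ν]}` of nodes of `T` extending `ν`. -/
def aboveNode (T : Set Node) (ν : Node) : Set Node := {η ∈ T | ν <+: η}

/-- The set `Z(n̄, w̄)` of Proposition 4.6. -/
def Zset (H : ℕ → ℕ) (A : Set ℕ) (nseq : ℕ → ℕ) (w : ℕ → Set ℕ) : Set (XSp H) :=
  {x | ∀ᶠ k in atTop, ∃ i ∈ A ∩ Set.Ico (nseq k) (nseq (k + 1)), ((x i : ℕ) ∈ w i)}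


section AuxCMZ

variable {H : ℕ → ℕ} {T : Set Node}

lemma branchNode_length (x : XSp H) (n : ℕ) : (branchNode H x n).length = n := by
  simp [branchNode]

lemma branchNode_getElem (x : XSp H) {n i : ℕ} (hi : i < (branchNode H x n).length) :
    (branchNode H x n)[i] = (x i : ℕ) := by
  simp [branchNode]

lemma branchNode_isHNode (x : XSp H) (n : ℕ) : IsHNode H (branchNode H x n) := by
  intro i hi
  rw [List.getD_eq_getElem _ _ hi, branchNode_getElem]
  exact (x i).isLt

lemma branchNode_eq_take (x : XSp H) {k n : ℕ} (h : k ≤ n) :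
    branchNode H x k = (branchNode H x n).take k := by
  apply List.ext_getElem
  · simp [branchNode_length, h]
  · intro i h1 h2
    rw [List.getElem_take, branchNode_getElem, branchNode_getElem]

lemma branchNode_ext {x y : XSp H} {n : ℕ} (h : ∀ i < n, x i = y i) :
    branchNode H x n = branchNode H y n := by
  simp only [branchNode]
  exact congrArg _ (funext fun i => by rw [h i i.isLt])

lemma take_mem (hT : IsTreeSet T) {η : Node} (h : η ∈ T) (k : ℕ) : η.take k ∈ T :=
  hT.2 η h _ (List.take_prefix k η)

lemma exists_ext_ge (hT : IsInfTree H T) {η : Node} (hη : η ∈ T) (n : ℕ) :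
    ∃ ν ∈ T, η <+: ν ∧ η.length + n ≤ ν.length := by
  induction n with
  | zero => exact ⟨η, hη, List.prefix_refl _, le_rfl⟩
  | succ n ih =>
    obtain ⟨ν, hν, hpre, hlen⟩ := ih
    obtain ⟨ρ, hρ, hpre2, hne⟩ := hT.2.2 ν hν
    refine ⟨ρ, hρ, hpre.trans hpre2, ?_⟩
    have h1 := hpre2.length_le
    have h2 : ν.length ≠ ρ.length := fun h => hne (hpre2.eq_of_length h)
    omega

lemma exists_ext_len (hT : IsInfTree H T) {η : Node} (hη : η ∈ T) {k : ℕ}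
    (hk : η.length ≤ k) : ∃ ν ∈ T, η <+: ν ∧ ν.length = k := by
  obtain ⟨ν, hν, hpre, hlen⟩ := exists_ext_ge hT hη (k - η.length)
  refine ⟨ν.take k, take_mem hT.1 hν k, List.prefix_take_iff.mpr ⟨hpre, hk⟩, ?_⟩
  rw [List.length_take]; omega

lemma below_finTree (hT : IsInfTree H T) (N : ℕ) : IsFinTree H (below T N) N := by
  refine ⟨⟨⟨hT.1.1, by simp⟩, ?_⟩, fun η hη => ⟨hT.2.1 η hη.1, hη.2⟩, ?_⟩
  · rintro η ⟨hη, hlen⟩ ν hpre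
    exact ⟨hT.1.2 η hη ν hpre, le_trans hpre.length_le hlen⟩
  · rintro η ⟨hη, hlen⟩
    obtain ⟨ν, hν, hpre, hl⟩ := exists_ext_len hT hη hlen
    exact ⟨ν, ⟨hν, hl.le⟩, hpre, hl⟩

lemma levelSet_below {n N : ℕ} (h : n ≤ N) : levelSet (below T N) n = levelSet T n := by
  ext η
  constructor
  · rintro ⟨⟨h1, _⟩, h2⟩; exact ⟨h1, h2⟩
  · rintro ⟨h1, h2⟩; exact ⟨⟨h1, h2 ▸ h⟩, h2⟩

lemma finite_hnodes (H : ℕ → ℕ) (n : ℕ) :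
    {η : Node | IsHNode H η ∧ η.length = n}.Finite := by
  have hsub : {η : Node | IsHNode H η ∧ η.length = n} ⊆
      Set.range (fun v : (i : Fin n) → Fin (H i) => List.ofFn fun i => (v i : ℕ)) := by
    rintro η ⟨h1, h2⟩
    refine ⟨fun i => ⟨η.getD i 0, h1 i (h2 ▸ i.isLt)⟩, ?_⟩
    apply List.ext_getElem (by simp [h2])
    intro i hi1 hi2
    simp [List.getElem?_eq_getElem hi2]
  exact (Set.finite_range _).subset hsub

lemma levelSet_finite (hn : ∀ η ∈ T, IsHNode H η) (n : ℕ) : (levelSet T n).Finite :=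
  (finite_hnodes H n).subset fun η hη => ⟨hn η hη.1, hη.2⟩

lemma exists_branch (hT : IsInfTree H T) {η : Node} (hη : η ∈ T) :
    ∃ x ∈ branches H T, branchNode H x η.length = η := by
  classical
  have step : ∀ ν : {ν : Node // ν ∈ T}, ∃ ρ ∈ T, ν.1 <+: ρ ∧ ρ.length = ν.1.length + 1 :=
    fun ν => exists_ext_len hT ν.2 (Nat.le_succ _)
  choose g hg1 hg2 hg3 using step
  let f : ℕ → {ν : Node // ν ∈ T} := fun n =>
    Nat.rec ⟨η, hη⟩ (fun _ p => ⟨g p, hg1 p⟩) n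
  have hfs : ∀ n, (f n).1 <+: (f (n + 1)).1 := fun n => hg2 (f n)
  have hlen : ∀ n, (f n).1.length = η.length + n := by
    intro n
    induction n with
    | zero => rfl
    | succ n ih =>
      have h1 : (f (n + 1)).1 = g (f n) := rfl
      rw [h1, hg3 (f n), ih]; omega
  have hchain : ∀ m n, m ≤ n → (f m).1 <+: (f n).1 := by
    intro m n h
    induction h with
    | refl => exact List.prefix_refl _
    | step _ ih => exact ih.trans (hfs _)
  set x : XSp H := fun i => ⟨(f (i + 1)).1.getD i 0, by
    have hH := hT.2.1 _ (f (i + 1)).2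
    exact hH i (by have := hlen (i + 1); omega)⟩ with hxdef
  have key : ∀ n, branchNode H x n = (f n).1.take n := by
    intro n
    apply List.ext_getElem
    · rw [branchNode_length, List.length_take]
      have := hlen n; omega
    · intro i h1 h2
      have hi : i < n := by rwa [branchNode_length] at h1
      rw [List.getElem_take, branchNode_getElem]
      have hpre := hchain (i + 1) n hi
      have hil : i < (f (i + 1)).1.length := by have := hlen (i + 1); omega
      rw [← hpre.getElem hil]
      show ((f (i + 1)).1.getD i 0 : ℕ) = _
      rw [List.getD_eq_getElem _ _ hil]
  have hxb : x ∈ branches H T := by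
    intro n
    rw [key n]
    exact take_mem hT.1 (f n).2 n
  refine ⟨x, hxb, ?_⟩
  rw [key η.length]
  have hpre : η <+: (f η.length).1 := hchain 0 η.length (Nat.zero_le _)
  exact (List.prefix_iff_eq_take.mp hpre).symm

lemma card_ext_le (H : ℕ → ℕ) (ρ : Node) {b : ℕ} (h : ρ.length ≤ b) :
    {η : Node | IsHNode H η ∧ η.length = b ∧ ρ <+: η}.ncard ≤
      ∏ i ∈ Finset.Ico ρ.length b, H i := by
  classical
  set m := ρ.length with hm
  set s := {η : Node | IsHNode H η ∧ η.length = b ∧ ρ <+: η} with hs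
  have hinj : Function.Injective (fun η : s =>
      (fun i : Fin (b - m) => (⟨η.1.getD (m + i) 0,
        η.2.1 (m + i) (by rw [η.2.2.1]; omega)⟩ : Fin (H (m + i)))) ) := by
    rintro ⟨η₁, hη₁⟩ ⟨η₂, hη₂⟩ hF
    ext1
    apply List.ext_getElem (by rw [hη₁.2.1, hη₂.2.1])
    intro i hi1 hi2
    have hib : i < b := by rwa [hη₁.2.1] at hi1
    by_cases him : i < m
    · rw [← hη₁.2.2.getElem (by omega), ← hη₂.2.2.getElem (by omega)]
    · have hj : i - m < b - m := by omega
      have := congrFun hF ⟨i - m, hj⟩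
      simp only [Fin.mk.injEq] at this
      have hmi : m + (i - m) = i := by omega
      rw [hmi] at this
      rw [← List.getD_eq_getElem η₁ 0 hi1, ← List.getD_eq_getElem η₂ 0 hi2]
      exact this
  have h1 : s.ncard = Nat.card s := (Nat.card_coe_set_eq s).symm
  rw [h1]
  calc Nat.card s ≤ Nat.card ((i : Fin (b - m)) → Fin (H (m + i))) :=
        Nat.card_le_card_of_injective _ hinj
    _ = ∏ i ∈ Finset.Ico m b, H i := by
        rw [Nat.card_eq_fintype_card, Fintype.card_pi]
        simp only [Fintype.card_fin]
        rw [Finset.prod_Ico_eq_prod_range]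
        exact Fin.prod_univ_eq_prod_range (fun i => H (m + i)) (b - m)

lemma ncard_biUnion_le (t : Finset ℕ) (E : ℕ → Set Node) (h : ∀ n ∈ t, (E n).Finite) :
    (⋃ n ∈ t, E n).ncard ≤ ∑ n ∈ t, (E n).ncard := by
  classical
  induction t using Finset.induction with
  | empty => simp
  | @insert a s hx ih =>
    rw [Finset.set_biUnion_insert, Finset.sum_insert hx]
    refine le_trans (Set.ncard_union_le _ _) ?_
    exact add_le_add le_rfl (ih fun n hn => h n (Finset.mem_insert_of_mem hn))

lemma depOpen {A : Set (XSp H)} {n : ℕ}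
    (hA : ∀ x y : XSp H, (∀ i < n, x i = y i) → x ∈ A → y ∈ A) : IsOpen A := by
  rw [isOpen_iff_mem_nhds]
  intro x hx
  have hU : IsOpen (⋂ i ∈ Finset.range n, (fun y : XSp H => y i) ⁻¹' {x i}) :=
    isOpen_biInter_finset fun i _ => (continuous_apply i).isOpen_preimage _ (isOpen_discrete _)
  refine Filter.mem_of_superset (hU.mem_nhds (by simp)) ?_
  intro y hy
  simp only [Set.mem_iInter, Set.mem_preimage, Set.mem_singleton_iff, Finset.mem_range] at hy
  exact hA x y (fun i hi => (hy i hi).symm) hx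

lemma cyl_open (η : Node) : IsOpen (cyl H η) := by
  refine depOpen (n := η.length) (fun x y h hx => ?_)
  show branchNode H y η.length = η
  rw [← branchNode_ext h]
  exact hx

lemma branches_closed (T : Set Node) : IsClosed (branches H T) := by
  have : branches H T = ⋂ n, {x : XSp H | branchNode H x n ∈ T} := by
    ext x; simp [branches, Set.mem_iInter]
  rw [this]
  refine isClosed_iInter fun n => ?_
  rw [← isOpen_compl_iff]
  refine depOpen (n := n) (fun x y h hx => ?_)
  simp only [Set.mem_compl_iff, Set.mem_setOf_eq] at hx ⊢
  rwa [← branchNode_ext h]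

lemma summable_inv_sq : Summable (fun i : ℕ => 1 / ((i : ℝ) + 1) ^ 2) := by
  have h2 : Summable (fun n : ℕ => 1 / (n : ℝ) ^ 2) :=
    (Real.summable_one_div_nat_pow (p := 2)).mpr one_lt_two
  have := (_root_.summable_nat_add_iff (f := fun n : ℕ => 1 / (n : ℝ) ^ 2) 1).mpr h2
  refine this.congr fun n => ?_
  push_cast
  ring

end AuxCMZ

/-- Proposition 2.13(2): an infinite `H`-tree `T` is `𝔭^cmz_H`-narrow if and only if
`[T]` is null with respect to the product measure on 𝒳. -/
theorem cmz_narrow_iff_null (H : ℕ → ℕ) (hH : ∀ n, 2 ≤ H n) (T : Set Node)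
    (hT : IsInfTree H T) :
    IsNarrowG (Gcmz H) T ↔ ProdNull H (branches H T) := by
  classical
  have hfnn : ∀ i : ℕ, (0:ℝ) ≤ 1 / ((i : ℝ) + 1) ^ 2 := fun i => by positivity
  constructor
  · -- narrow → null
    intro hnar ε hε
    set f : ℕ → ℝ := fun i => 1 / ((i : ℝ) + 1) ^ 2 with hfdef
    set ε' := min ε 1 with hε'def
    have hε'pos : 0 < ε' := lt_min hε zero_lt_one
    have hε'ne : ε' ≠ ⊤ := ne_top_of_le_ne_top ENNReal.one_ne_top (min_le_right _ _)
    set δ : ℝ := ε'.toReal / 2 with hδdef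
    have hδpos : 0 < δ := by
      have := ENNReal.toReal_pos hε'pos.ne' hε'ne
      positivity
    obtain ⟨a₀, ha₀⟩ := Filter.eventually_atTop.mp
      ((tendsto_sum_nat_add f).eventually (gt_mem_nhds hδpos))
    obtain ⟨a, ha, b, hab, hG⟩ := hnar a₀
    rcases hG with hroot | ⟨S, a', b', N, heq, hfinS, _, _, hratio⟩
    · exfalso
      have hb0 : b = 0 := by
        have := congrArg (fun y : Set Node × ℕ × ℕ => y.2.2) hroot
        simpa using this
      omega
    · have hS : below T (b + 1) = S := congrArg Prod.fst heq
      have ha' : a = a' := congrArg (fun y : Set Node × ℕ × ℕ => y.2.1) heq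
      have hb' : b = b' := congrArg (fun y : Set Node × ℕ × ℕ => y.2.2) heq
      rw [← hS, ← ha', ← hb', levelSet_below (Nat.le_succ b)] at hratio
      -- tail bound
      have hsummable : Summable f := summable_inv_sq
      have hshift : Summable (fun k => f (a + k)) := by
        have h1 := (_root_.summable_nat_add_iff (f := f) a).mpr hsummable
        exact h1.congr fun n => by rw [add_comm]
      have htail : ∑ i ∈ Finset.Icc a b, f i ≤ δ := by
        have h1 : ∑ i ∈ Finset.Icc a b, f i = ∑ k ∈ Finset.range (b + 1 - a), f (a + k) := by
          rw [← Finset.Ico_add_one_right_eq_Icc, Finset.sum_Ico_eq_sum_range]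
        have h2 : ∑ k ∈ Finset.range (b + 1 - a), f (a + k) ≤ ∑' k, f (a + k) :=
          Summable.sum_le_tsum _ (fun i _ => hfnn _) hshift
        have h3 : ∑' k, f (a + k) = ∑' k, f (k + a) := tsum_congr fun k => by rw [add_comm]
        have h4 : ∑' k, f (k + a) < δ := ha₀ a ha
        linarith
      have hKP : ((levelSet T b).ncard : ℝ) / ∏ i ∈ Finset.range b, (H i : ℝ) ≤ δ :=
        le_trans hratio htail
      set P : ℕ := ∏ i ∈ Finset.range b, H i with hPdef
      have hPpos : 0 < P := Finset.prod_pos fun i _ => by have := hH i; omega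
      have hPcast : ∏ i ∈ Finset.range b, ((H i : ℝ)) = (P : ℝ) := by
        rw [hPdef]; push_cast; ring
      rw [hPcast] at hKP
      -- padding exponent
      have hhalf : (0:ℝ≥0∞) < ε' / 2 := ENNReal.div_pos hε'pos.ne' ENNReal.ofNat_ne_top
      obtain ⟨p, hp⟩ := ENNReal.exists_inv_two_pow_lt hhalf.ne'
      have hfin := levelSet_finite hT.2.1 b
      set l := hfin.toFinset.toList with hldef
      have hK : l.length = (levelSet T b).ncard := by
        rw [hldef, Set.ncard_eq_toFinset_card _ hfin, Finset.length_toList]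
      set C : ℕ → Node := fun n =>
        if h : n < l.length then l.get ⟨n, h⟩ else List.replicate (n + p + 1) 0 with hCdef
      have hlmem : ∀ x ∈ l, x ∈ levelSet T b := by
        intro x hx
        rw [hldef, Finset.mem_toList, Set.Finite.mem_toFinset] at hx
        exact hx
      have hCmem : ∀ (n : ℕ) (hn : n < l.length), C n ∈ levelSet T b := by
        intro n hn
        rw [hCdef]
        simp only [dif_pos hn]
        exact hlmem _ (List.get_mem l _)
      refine ⟨C, ?_, ?_⟩
      · intro x hx
        have hmem : branchNode H x b ∈ levelSet T b := ⟨hx b, branchNode_length x b⟩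
        have hl : branchNode H x b ∈ l := by
          rw [hldef, Finset.mem_toList, Set.Finite.mem_toFinset]; exact hmem
        obtain ⟨n, hget⟩ := List.mem_iff_get.mp hl
        refine Set.mem_iUnion.mpr ⟨n.1, ?_⟩
        show branchNode H x (C n.1).length = C n.1
        have hCn : C n.1 = branchNode H x b := by
          rw [hCdef]; simp only [dif_pos n.isLt]; rw [← hget]
        rw [hCn, branchNode_length]
      · -- mass bound
        have hbound : ∀ n, cylMass H (C n) ≤
            (if n < l.length then ((P : ℝ≥0∞))⁻¹ else 0) + 2⁻¹ ^ (n + p + 1) := by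
          intro n
          by_cases hn : n < l.length
          · have hlen : (C n).length = b := (hCmem n hn).2
            have : cylMass H (C n) = ((P : ℝ≥0∞))⁻¹ := by
              rw [cylMass, hlen, hPdef]
              push_cast
              rfl
            rw [this, if_pos hn]
            exact le_self_add
          · have hCn : C n = List.replicate (n + p + 1) 0 := by
              rw [hCdef]; simp only [dif_neg hn]
            have hlen : (C n).length = n + p + 1 := by rw [hCn, List.length_replicate]
            have h2P : (2 : ℝ≥0∞) ^ (n + p + 1) ≤
                ∏ i ∈ Finset.range (n + p + 1), (H i : ℝ≥0∞) := by
              have h0 : (2 : ℝ≥0∞) ^ (n + p + 1) = ∏ _i ∈ Finset.range (n + p + 1), (2:ℝ≥0∞) := by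
                rw [Finset.prod_const, Finset.card_range]
              rw [h0]
              exact Finset.prod_le_prod' fun i _ => by exact_mod_cast hH i
            have : cylMass H (C n) ≤ 2⁻¹ ^ (n + p + 1) := by
              rw [cylMass, hlen, ← ENNReal.inv_pow]
              exact ENNReal.inv_le_inv.mpr h2P
            rw [if_neg hn, zero_add]
            exact this
        have hsplit : ∑' n, cylMass H (C n) ≤
            (∑' n, (if n < l.length then ((P : ℝ≥0∞))⁻¹ else 0)) + ∑' n, 2⁻¹ ^ (n + p + 1) := by
          rw [← ENNReal.tsum_add]
          exact ENNReal.tsum_le_tsum hbound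
        have h1 : (∑' n, (if n < l.length then ((P : ℝ≥0∞))⁻¹ else 0)) ≤ ε' / 2 := by
          rw [tsum_eq_sum (s := Finset.range l.length)
            (fun n hn => if_neg (by simpa using hn))]
          rw [Finset.sum_congr rfl (fun n hn => if_pos (Finset.mem_range.mp hn)),
            Finset.sum_const, Finset.card_range, nsmul_eq_mul]
          -- (l.length : ℝ≥0∞) * P⁻¹ ≤ ε'/2
          have heq1 : (l.length : ℝ≥0∞) * ((P : ℝ≥0∞))⁻¹ =
              ENNReal.ofReal ((l.length : ℝ) / P) := by
            rw [ENNReal.ofReal_div_of_pos (by exact_mod_cast hPpos),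
              ENNReal.ofReal_natCast, ENNReal.ofReal_natCast, div_eq_mul_inv]
          rw [heq1]
          have hle : ((l.length : ℝ)) / P ≤ δ := by rw [hK]; exact hKP
          refine le_trans (ENNReal.ofReal_le_ofReal hle) ?_
          rw [hδdef, ENNReal.ofReal_div_of_pos two_pos, ENNReal.ofReal_toReal hε'ne]
          norm_num
        have h2 : (∑' n, (2⁻¹ : ℝ≥0∞) ^ (n + p + 1)) ≤ ε' / 2 := by
          have hre : ∀ n : ℕ, (2⁻¹ : ℝ≥0∞) ^ (n + p + 1) = 2⁻¹ ^ (p + 1) * 2⁻¹ ^ n := by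
            intro n
            rw [show n + p + 1 = (p + 1) + n by omega, pow_add]
          rw [tsum_congr hre, ENNReal.tsum_mul_left, ENNReal.tsum_geometric,
            ENNReal.one_sub_inv_two, inv_inv]
          have : (2⁻¹ : ℝ≥0∞) ^ (p + 1) * 2 = 2⁻¹ ^ p := by
            rw [pow_succ, mul_assoc, ENNReal.inv_mul_cancel two_ne_zero ENNReal.ofNat_ne_top,
              mul_one]
          rw [this]
          exact hp.le
        calc ∑' n, cylMass H (C n) ≤ _ := hsplit
          _ ≤ ε' / 2 + ε' / 2 := add_le_add h1 h2
          _ = ε' := ENNReal.add_halves ε'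
          _ ≤ ε := min_le_left _ _
  · -- null → narrow
    intro hnull m
    set f : ℕ → ℝ := fun i => 1 / ((i : ℝ) + 1) ^ 2 with hfdef
    have hfm : 0 < f m := by positivity
    obtain ⟨C, hcov, hmass⟩ := hnull (ENNReal.ofReal (f m)) (ENNReal.ofReal_pos.mpr hfm)
    have hcomp : IsCompact (branches H T) := (branches_closed T).isCompact
    obtain ⟨t, ht⟩ := hcomp.elim_finite_subcover (fun n => cyl H (C n))
      (fun n => cyl_open _) hcov
    set b := max (m + 1) (t.sup fun n => (C n).length) with hbdef
    have hmb : m < b := lt_of_lt_of_le (Nat.lt_succ_self m) (le_max_left _ _)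
    have hCb : ∀ n ∈ t, (C n).length ≤ b := by
      intro n hn
      rw [hbdef]
      exact le_trans (Finset.le_sup (f := fun n => (C n).length) hn) (le_max_right _ _)
    refine ⟨m, le_rfl, b, hmb, Or.inr ⟨below T (b + 1), m, b, b + 1, rfl,
      below_finTree hT (b + 1), hmb.le, Nat.le_succ b, ?_⟩⟩
    rw [levelSet_below (Nat.le_succ b)]
    set E : ℕ → Set Node := fun n => {η | IsHNode H η ∧ η.length = b ∧ C n <+: η} with hEdef
    have hEfin : ∀ n ∈ t, (E n).Finite := fun n _ =>
      (finite_hnodes H b).subset fun η h => ⟨h.1, h.2.1⟩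
    have hcover : levelSet T b ⊆ ⋃ n ∈ t, E n := by
      rintro η ⟨hηT, hηb⟩
      obtain ⟨x, hx, hxη⟩ := exists_branch hT hηT
      rw [hηb] at hxη
      obtain ⟨n, hn, hxc⟩ := Set.mem_iUnion₂.mp (ht hx)
      refine Set.mem_biUnion hn ?_
      have h1 : branchNode H x (C n).length = C n := hxc
      have h2 := branchNode_eq_take x (hCb n hn)
      rw [h1, hxη] at h2
      refine ⟨hT.2.1 η hηT, hηb, ?_⟩
      rw [h2]
      exact List.take_prefix _ _
    have hcard : (levelSet T b).ncard ≤ ∑ n ∈ t, ∏ i ∈ Finset.Ico (C n).length b, H i := by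
      refine le_trans (Set.ncard_le_ncard hcover (Set.Finite.biUnion t.finite_toSet hEfin)) ?_
      exact le_trans (ncard_biUnion_le t E hEfin)
        (Finset.sum_le_sum fun n hn => card_ext_le H (C n) (hCb n hn))
    set Q : ℕ → ℕ := fun n => ∏ i ∈ Finset.range (C n).length, H i with hQdef
    have hQpos : ∀ n, 0 < Q n := fun n => Finset.prod_pos fun i _ => by have := hH i; omega
    set P : ℕ := ∏ i ∈ Finset.range b, H i with hPdef
    have hPpos : 0 < P := Finset.prod_pos fun i _ => by have := hH i; omega
    have hQR : ∀ n ∈ t, Q n * ∏ i ∈ Finset.Ico (C n).length b, H i = P := by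
      intro n hn
      simp only [hQdef, hPdef, Finset.range_eq_Ico]
      exact Finset.prod_Ico_consecutive H (Nat.zero_le _) (hCb n hn)
    have hmassR : ∑ n ∈ t, ((Q n : ℝ))⁻¹ ≤ f m := by
      have h1 : ∀ n, cylMass H (C n) = ((Q n : ℝ≥0∞))⁻¹ := by
        intro n
        rw [cylMass, hQdef]
        push_cast
        rfl
      have h2 : ∑ n ∈ t, cylMass H (C n) ≤ ENNReal.ofReal (f m) :=
        le_trans (ENNReal.sum_le_tsum t) hmass
      simp only [h1] at h2
      have hne : ∀ n ∈ t, ((Q n : ℝ≥0∞))⁻¹ ≠ ⊤ := fun n _ =>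
        ENNReal.inv_ne_top.mpr (by exact_mod_cast (hQpos n).ne')
      have h3 := (ENNReal.toReal_le_toReal
        (by rw [← lt_top_iff_ne_top]; exact ENNReal.sum_lt_top.mpr fun n hn =>
          lt_top_iff_ne_top.mpr (hne n hn)) ENNReal.ofReal_ne_top).mpr h2
      rw [ENNReal.toReal_sum hne, ENNReal.toReal_ofReal hfm.le] at h3
      simpa [ENNReal.toReal_inv] using h3
    have hPcast : ∏ i ∈ Finset.range b, ((H i : ℝ)) = (P : ℝ) := by
      rw [hPdef]; push_cast; ring
    show ((levelSet T b).ncard : ℝ) / ∏ i ∈ Finset.range b, (H i : ℝ) ≤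
      ∑ i ∈ Finset.Icc m b, 1 / ((i : ℝ) + 1) ^ 2
    rw [hPcast]
    have step1 : ((levelSet T b).ncard : ℝ) / P ≤ ∑ n ∈ t, ((Q n : ℝ))⁻¹ := by
      have h4 : ((levelSet T b).ncard : ℝ) ≤
          ∑ n ∈ t, ∏ i ∈ Finset.Ico (C n).length b, (H i : ℝ) := by
        exact_mod_cast hcard
      have hP0 : (0:ℝ) < (P:ℝ) := by exact_mod_cast hPpos
      calc ((levelSet T b).ncard : ℝ) / P
          ≤ (∑ n ∈ t, ∏ i ∈ Finset.Ico (C n).length b, (H i : ℝ)) / P := by gcongr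
        _ = ∑ n ∈ t, (∏ i ∈ Finset.Ico (C n).length b, (H i : ℝ)) / P := Finset.sum_div _ _ _
        _ = ∑ n ∈ t, ((Q n : ℝ))⁻¹ := by
            refine Finset.sum_congr rfl fun n hn => ?_
            have hprod : ((Q n : ℝ)) * ∏ i ∈ Finset.Ico (C n).length b, (H i : ℝ) = P := by
              exact_mod_cast hQR n hn
            have hQ0 : ((Q n : ℝ)) ≠ 0 := by exact_mod_cast (hQpos n).ne'
            have hR0 : (0:ℝ) < ∏ i ∈ Finset.Ico (C n).length b, (H i : ℝ) :=
              Finset.prod_pos fun i _ => by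
                have := hH i
                exact_mod_cast Nat.lt_of_lt_of_le Nat.zero_lt_two this
            rw [← hprod, mul_comm, ← div_div, div_self hR0.ne', one_div]
    have hsingle : f m ≤ ∑ i ∈ Finset.Icc m b, f i :=
      Finset.single_le_sum (fun i _ => hfnn i) (Finset.mem_Icc.mpr ⟨le_rfl, hmb.le⟩)
    exact le_trans (le_trans step1 hmassR) hsingle

end UnivForcing
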